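/- arXiv:1201.1672 — 8 statements merged into one kernel-verified Lean document; each statement's English description precedes it below -/
import Mathlib

section
/- Let E be a finite-dimensional complex vector space and H : E → E a linear operator. Suppose E₁, …, E_k are H-invariant subspaces such that the spectra of the restrictions H|E_i are pairwise disjoint. Then for any vectors v₁ ∈ E₁, …, v_k ∈ E_k, the smallest H-invariant subspace containing {v₁, …, v_k} equals the smallest H-invariant subspace containing the single vector v₁ + ⋯ + v_k. -/
/-
Let `μᵢ` be the minimal polynomial of `H|Eᵢ`, so `μᵢ(H)` kills `Eᵢ`. Disjoint spectra make the
`μᵢ` pairwise coprime over `ℂ`, hence `μᵢ` is coprime to `qᵢ = ∏_{j ≠ i} μⱼ`. Writing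
`a μᵢ + b qᵢ = 1` gives `vᵢ = b(H) qᵢ(H) (v₁ + ⋯ + vₖ)`, so every `vᵢ` lies in the cyclic
subspace generated by the sum; the reverse inclusion is clear.
-/

open Polynomial Function

namespace Module.End

theorem aeval_restrict_apply {R M : Type*} [CommSemiring R] [AddCommMonoid M] [Module R M]
    (H : Module.End R M) {p : Submodule R M} (h : ∀ x ∈ p, H x ∈ p) (q : R[X]) (x : p) :
    ((aeval (H.restrict h) q) x : M) = aeval H q x := by
  induction q using Polynomial.induction_on' with
  | add a b ha hb => simp [ha, hb]
  | monomial n a => simp [aeval_monomial, pow_restrict n h]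

theorem span_pow_orbit_mem_invtSubmodule {R M : Type*} [Semiring R] [AddCommMonoid M]
    [Module R M] (H : Module.End R M) (y : M) :
    Submodule.span R {x | ∃ t : ℕ, x = (H ^ t) y} ∈ H.invtSubmodule := by
  rw [mem_invtSubmodule, Submodule.span_le]
  rintro _ ⟨t, rfl⟩
  exact Submodule.subset_span ⟨t + 1, by rw [pow_succ', mul_apply]⟩

section Field

variable {K V : Type*} [Field K] [AddCommGroup V] [Module K V]

theorem aeval_minpoly_restrict_apply (H : Module.End K V) {p : Submodule K V}
    (h : ∀ x ∈ p, H x ∈ p) {x : V} (hx : x ∈ p) : aeval H (minpoly K (H.restrict h)) x = 0 := by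
  simpa using (aeval_restrict_apply H h (minpoly K (H.restrict h)) ⟨x, hx⟩).symm

theorem mem_spectrum_iff_isRoot_minpoly [FiniteDimensional K V] {f : Module.End K V} {a : K} :
    a ∈ spectrum K f ↔ (minpoly K f).IsRoot a := by
  rw [← hasEigenvalue_iff_mem_spectrum, hasEigenvalue_iff_isRoot]

theorem isCoprime_minpoly_of_disjoint_spectrum [IsAlgClosed K] {W : Type*} [AddCommGroup W]
    [Module K W] [FiniteDimensional K V] [FiniteDimensional K W] {f : Module.End K V}
    {g : Module.End K W} (hfg : Disjoint (spectrum K f) (spectrum K g)) :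
    IsCoprime (minpoly K f) (minpoly K g) := by
  rw [isCoprime_iff_aeval_ne_zero_of_isAlgClosed (k := K) K]
  intro a
  by_contra! ⟨hf, hg⟩
  rw [coe_aeval_eq_eval, ← IsRoot, ← mem_spectrum_iff_isRoot_minpoly] at hf hg
  exact hfg.notMem_of_mem_left hf hg

end Field

theorem mem_of_sum_mem_of_pairwise_isCoprime {R M ι : Type*} [CommRing R] [AddCommGroup M]
    [Module R M] [Fintype ι] [DecidableEq ι] (H : Module.End R M) {W : Submodule R M}
    (hW : W ∈ H.invtSubmodule) {μ : ι → R[X]} (hμ : Pairwise (IsCoprime on μ)) {v : ι → M}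
    (hv : ∀ i, aeval H (μ i) (v i) = 0) (hsum : ∑ i, v i ∈ W) (i : ι) : v i ∈ W := by
  set q := ∏ j ∈ Finset.univ.erase i, μ j
  have hq : aeval H q (∑ j, v j) = aeval H q (v i) := by
    rw [map_sum]
    refine Finset.sum_eq_single i (fun j _ hji ↦ ?_) (by simp)
    obtain ⟨c, hc⟩ : μ j ∣ q := Finset.dvd_prod_of_mem μ (by simpa using hji)
    rw [hc, mul_comm, map_mul, mul_apply, hv, map_zero]
  obtain ⟨a, b, hab⟩ : IsCoprime (μ i) q :=
    IsCoprime.prod_right fun j hj ↦ hμ (Finset.ne_of_mem_erase hj).symm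
  have hv_eq : v i = aeval H b (aeval H q (∑ j, v j)) := calc
    v i = aeval H (a * μ i + b * q) (v i) := by rw [hab, map_one, one_apply]
    _ = aeval H b (aeval H q (∑ j, v j)) := by
      rw [map_add, LinearMap.add_apply, map_mul, mul_apply, hv, map_zero, zero_add, map_mul,
        mul_apply, hq]
  rw [hv_eq]
  exact aeval_apply_smul_mem_of_le_comap (aeval_apply_smul_mem_of_le_comap hsum q H hW) b H hW

end Module.End

/-- For a linear operator `H` on a finite-dimensional complex vector space and
`H`-invariant subspaces `p i` whose restricted spectra are pairwise disjoint,
the smallest `H`-invariant subspace containing vectors `v i ∈ p i` equals the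
smallest `H`-invariant subspace containing their sum. -/
theorem stmt0 {E : Type*} [AddCommGroup E] [Module ℂ E] [FiniteDimensional ℂ E]
    (H : Module.End ℂ E) {k : ℕ} (p : Fin k → Submodule ℂ E)
    (hinv : ∀ i, ∀ x ∈ p i, H x ∈ p i)
    (hspec : ∀ i j, i ≠ j →
      Disjoint (spectrum ℂ (H.restrict (hinv i))) (spectrum ℂ (H.restrict (hinv j))))
    (v : Fin k → E) (hv : ∀ i, v i ∈ p i) :
    Submodule.span ℂ {x : E | ∃ t : ℕ, ∃ i : Fin k, x = (H ^ t) (v i)} =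
      Submodule.span ℂ {x : E | ∃ t : ℕ, x = (H ^ t) (∑ i, v i)} := by
  have hW := Module.End.span_pow_orbit_mem_invtSubmodule H (∑ i, v i)
  have hvW (i : Fin k) : v i ∈ Submodule.span ℂ {x : E | ∃ t : ℕ, x = (H ^ t) (∑ i, v i)} :=
    Module.End.mem_of_sum_mem_of_pairwise_isCoprime H hW
      (fun i j hij ↦ Module.End.isCoprime_minpoly_of_disjoint_spectrum (hspec i j hij))
      (fun i ↦ Module.End.aeval_minpoly_restrict_apply H (hinv i) (hv i))
      (Submodule.subset_span ⟨0, rfl⟩) i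
  apply le_antisymm
  · rw [Submodule.span_le]
    rintro _ ⟨t, i, rfl⟩
    exact Module.End.pow_apply_mem_of_forall_mem t hW _ (hvW i)
  · rw [Submodule.span_le]
    rintro _ ⟨t, rfl⟩
    rw [map_sum]
    exact Submodule.sum_mem _ fun i _ ↦ Submodule.subset_span ⟨t, i, rfl⟩
end

section
/- The space of all d×d Toeplitz matrices over ℂ (matrices constant along each diagonal) is a transitive subspace of Mat_{d×d}(ℂ), i.e., for every nonzero v ∈ ℂᵈ and every w ∈ ℂᵈ there is a Toeplitz matrix T with T·v = w. -/
/-!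
Read `v` and `w` as polynomials `V = ∑ vⱼ Xʲ` and `W = ∑ wᵢ Xⁱ`. If the entries `t m` are the
coefficients of the Laurent series `X⁻ᵏ S` for a power series `S`, then `(T v)ᵢ` is the
coefficient of `Xⁱ⁺ᵏ` in `S V`. Taking `k` to be the order of `V ≠ 0`, we have `V = Xᵏ U` with `U`
invertible in `ℂ⟦X⟧`, and `S = W U⁻¹` gives `S V = W Xᵏ`, hence `T v = w`.
-/

open PowerSeries
open scoped LaurentSeries

variable {R : Type*}

theorem PowerSeries.coeff_coe_natCast_sub [Semiring R] (S : R⟦X⟧) (n j : ℕ) :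
    (S : R⸨X⸩).coeff ((n : ℤ) - j) = coeff n (S * X ^ j) := by
  rw [coeff_mul_X_pow', PowerSeries.coeff_coe]
  split_ifs
  · omega
  · rfl
  · congr; omega
  · omega

theorem PowerSeries.sum_coeff_coe_sub_mul_eq_coeff_mul_ofFn [CommSemiring R] [DecidableEq R]
    {d : ℕ} (S : R⟦X⟧) (v : Fin d → R) (n : ℕ) :
    ∑ j : Fin d, (S : R⸨X⸩).coeff ((n : ℤ) - j) * v j =
      coeff n (S * (Polynomial.ofFn d v : R⟦X⟧)) := by
  simp_rw [Polynomial.ofFn_eq_sum_monomial, ← Polynomial.coeToPowerSeries.ringHom_apply, map_sum,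
    Polynomial.coeToPowerSeries.ringHom_apply, Polynomial.coe_monomial, Finset.mul_sum, map_sum,
    monomial_eq_C_mul_X_pow, mul_comm (C _), ← mul_assoc, coeff_mul_C, coeff_coe_natCast_sub]

theorem PowerSeries.exists_mul_eq_mul_X_pow_order {K : Type*} [Field K] {V : K⟦X⟧} (hV : V ≠ 0)
    (W : K⟦X⟧) : ∃ S : K⟦X⟧, S * V = W * X ^ V.order.toNat := by
  have hU : constantCoeff V.divXPowOrder ≠ 0 := constantCoeff_divXPowOrder_eq_zero_iff.not.mpr hV
  refine ⟨W * V.divXPowOrder⁻¹, ?_⟩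
  calc W * V.divXPowOrder⁻¹ * V
      = W * V.divXPowOrder⁻¹ * (X ^ V.order.toNat * V.divXPowOrder) := by
        rw [X_pow_order_mul_divXPowOrder]
    _ = W * X ^ V.order.toNat * (V.divXPowOrder⁻¹ * V.divXPowOrder) := by ring
    _ = W * X ^ V.order.toNat := by rw [PowerSeries.inv_mul_cancel _ hU, mul_one]

/-- The space of `d × d` complex Toeplitz matrices (entry `(i,j)` equal to
`t (i - j)`) is transitive: every nonzero vector can be mapped to any vector. -/
theorem stmt5 (d : ℕ) (v : Fin d → ℂ) (hv : v ≠ 0) (w : Fin d → ℂ) :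
    ∃ t : ℤ → ℂ,
      (Matrix.of fun i j : Fin d => t ((i : ℤ) - (j : ℤ))).mulVec v = w := by
  classical
  set V : ℂ⟦X⟧ := ↑(Polynomial.ofFn d v)
  have hV : V ≠ 0 := by
    simpa [V, Polynomial.coe_eq_zero_iff] using (Polynomial.injective_ofFn d).ne hv
  obtain ⟨S, hS⟩ := exists_mul_eq_mul_X_pow_order hV ↑(Polynomial.ofFn d w)
  set k := V.order.toNat
  refine ⟨fun m => (S : ℂ⸨X⸩).coeff (m + k), funext fun i => ?_⟩
  have hshift : ∀ j : Fin d, (i : ℤ) - j + k = ((i + k : ℕ) : ℤ) - j := fun j => by push_cast; ring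
  simp only [Matrix.mulVec, dotProduct, Matrix.of_apply, hshift,
    sum_coeff_coe_sub_mul_eq_coeff_mul_ofFn]
  rw [hS, coeff_mul_X_pow, Polynomial.coeff_coe, Polynomial.ofFn_coeff_eq_val_of_lt _ i.isLt]
end

section
/- The space of all d×d complex Hankel matrices is a transitive subspace of Mat_{d×d}(ℂ). -/
/-!
It suffices that the image of `h ↦ H_h v` has trivial orthogonal. If `u` is orthogonal to it, then
testing against the Hankel matrices with a single nonzero anti-diagonal gives
`∑_{i+j=n} u i * v j = 0` for every `n`, i.e. `U * V = 0` for the polynomials `U`, `V` with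
coefficient vectors `u`, `v`. As `K[X]` is a domain and `V ≠ 0`, `u = 0`.
-/

open Finset Polynomial

theorem Submodule.eq_top_of_forall_dotProduct_eq_zero {K n : Type*} [Field K] [Fintype n]
    [DecidableEq n] (W : Submodule K (n → K)) (h : ∀ u, (∀ w ∈ W, u ⬝ᵥ w = 0) → u = 0) :
    W = ⊤ := by
  rw [← Submodule.dualAnnihilator_eq_bot_iff, eq_bot_iff]
  intro f hf
  obtain ⟨u, rfl⟩ := (dotProductEquiv K n).surjective f
  rw [Submodule.mem_dualAnnihilator] at hf
  simp [h u hf]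

theorem Polynomial.coeff_ofFn_mul_ofFn {R : Type*} [CommSemiring R] [DecidableEq R] {d : ℕ}
    (u v : Fin d → R) (n : ℕ) :
    (ofFn d u * ofFn d v).coeff n =
      ∑ i : Fin d, ∑ j : Fin d, if (i : ℕ) + j = n then u i * v j else 0 := by
  simp only [ofFn_eq_sum_monomial, sum_mul_sum, monomial_mul_monomial, finsetSum_coeff,
    coeff_monomial]

section Hankel

variable {R : Type*} [CommSemiring R] {d : ℕ}

def hankelMulVec (v : Fin d → R) : (ℕ → R) →ₗ[R] Fin d → R :=
  LinearMap.pi fun i => ∑ j, v j • LinearMap.proj ((i : ℕ) + j)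

theorem hankelMulVec_apply (v : Fin d → R) (h : ℕ → R) :
    hankelMulVec v h = (Matrix.of fun i j : Fin d => h (i + j)).mulVec v := by
  ext i
  simp [hankelMulVec, Matrix.mulVec, dotProduct, mul_comm]

theorem dotProduct_hankelMulVec_single [DecidableEq R] (u v : Fin d → R) (n : ℕ) :
    u ⬝ᵥ hankelMulVec v (Pi.single n 1) = (ofFn d u * ofFn d v).coeff n := by
  simp [hankelMulVec, coeff_ofFn_mul_ofFn, dotProduct, Pi.single_apply, mul_sum]

theorem hankelMulVec_surjective {K : Type*} [Field K] {v : Fin d → K} (hv : v ≠ 0) :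
    Function.Surjective (hankelMulVec v) := by
  classical
  rw [← LinearMap.range_eq_top]
  refine Submodule.eq_top_of_forall_dotProduct_eq_zero _ fun u hu => ?_
  have hprod : ofFn d u * ofFn d v = 0 := by
    ext n
    rw [← dotProduct_hankelMulVec_single, coeff_zero]
    exact hu _ (LinearMap.mem_range_self _ _)
  have hV : ofFn d v ≠ 0 := (map_ne_zero_iff _ (injective_ofFn d)).mpr hv
  exact (map_eq_zero_iff _ (injective_ofFn d)).mp ((mul_eq_zero.mp hprod).resolve_right hV)

end Hankel

/-- The space of `d × d` complex Hankel matrices (entry `(i,j)` equal to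
`h (i + j)`, constant along anti-diagonals) is transitive. -/
theorem stmt6 (d : ℕ) (v : Fin d → ℂ) (hv : v ≠ 0) (w : Fin d → ℂ) :
    ∃ h : ℕ → ℂ,
      (Matrix.of fun i j : Fin d => h ((i : ℕ) + (j : ℕ))).mulVec v = w := by
  obtain ⟨h, rfl⟩ := hankelMulVec_surjective hv w
  exact ⟨h, (hankelMulVec_apply v h).symm⟩
end

section
/- Let F be a nonempty finite set, (x_α)_{α∈F} positive real numbers, and F = F₀ ⊔ F₁ a partition. For ε, δ ∈ {0,1} set Σ_{εδ} = Σ_{(α,β)∈F_ε×F_δ} min(x_α, x_β). Then Σ₀₀ − 2Σ₀₁ + Σ₁₁ ≥ (|F₀| − |F₁|)² · min_{α∈F} x_α. In particular Σ₀₁ ≤ (Σ₀₀ + Σ₁₁)/2, with equality only if |F₀| = |F₁|. -/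
/-!
Writing `s = 𝟙_{F₀} − 𝟙_{F₁}`, the left-hand side is the quadratic form
`Q(x) = ∑_{α,β} s_α s_β min(x_α, x_β)`. Shifting all `x_α` by a constant `c` changes `Q` by
`(∑ s)² c = (|F₀| − |F₁|)² c`, and once the minimal entry has been shifted to `0` its row and
column of the form vanish. Induction on the index set therefore shows that the kernel `min` is
positive semidefinite on nonnegative vectors, and the first shift by `m = min x` gives the bound.
-/

section MinQuadForm

open Finset

variable {ι : Type*}

def minQuadForm (S : Finset ι) (s y : ι → ℝ) : ℝ :=
  ∑ α ∈ S, ∑ β ∈ S, s α * s β * min (y α) (y β)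

theorem minQuadForm_eq_sq_mul_add_sub (S : Finset ι) (s y : ι → ℝ) (c : ℝ) :
    minQuadForm S s y = (∑ α ∈ S, s α) ^ 2 * c + minQuadForm S s (fun α => y α - c) := by
  have hterm : ∀ α β, s α * s β * min (y α) (y β)
      = s α * s β * c + s α * s β * min (y α - c) (y β - c) := fun α β => by
    rw [min_sub_sub_right]; ring
  rw [sq, sum_mul_sum, sum_mul]
  simp only [minQuadForm, hterm, sum_add_distrib, sum_mul]

theorem minQuadForm_erase [DecidableEq ι] {S : Finset ι} (s : ι → ℝ) {z : ι → ℝ}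
    (hz : ∀ α ∈ S, 0 ≤ z α) {γ : ι} (hγ : z γ = 0) :
    minQuadForm (S.erase γ) s z = minQuadForm S s z :=
  calc minQuadForm (S.erase γ) s z
      = ∑ α ∈ S.erase γ, ∑ β ∈ S, s α * s β * min (z α) (z β) :=
        sum_congr rfl fun α hα => sum_erase _ (by simp [hγ, hz α (mem_of_mem_erase hα)])
    _ = minQuadForm S s z := sum_erase _ (sum_eq_zero fun β hβ => by simp [hγ, hz β hβ])

theorem minQuadForm_nonneg [DecidableEq ι] (S : Finset ι) (s : ι → ℝ) {y : ι → ℝ}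
    (hy : ∀ α ∈ S, 0 ≤ y α) : 0 ≤ minQuadForm S s y := by
  induction S using Finset.strongInduction generalizing y with
  | H S ih =>
    rcases S.eq_empty_or_nonempty with rfl | hS
    · simp [minQuadForm]
    obtain ⟨γ, hγ, hmin⟩ := S.exists_min_image y hS
    have hshift : ∀ α ∈ S, 0 ≤ y α - y γ := fun α hα => sub_nonneg.2 (hmin α hα)
    rw [minQuadForm_eq_sq_mul_add_sub S s y (y γ), ← minQuadForm_erase s hshift (sub_self _)]
    exact add_nonneg (mul_nonneg (sq_nonneg _) (hy γ hγ))
      (ih _ (erase_ssubset hγ) fun α hα => hshift α (mem_of_mem_erase hα))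

theorem minQuadForm_union_sign [DecidableEq ι] {F0 F1 : Finset ι} (hdisj : Disjoint F0 F1)
    (y : ι → ℝ) :
    minQuadForm (F0 ∪ F1) (fun α => if α ∈ F0 then 1 else -1) y
      = (∑ α ∈ F0, ∑ β ∈ F0, min (y α) (y β)) - 2 * (∑ α ∈ F0, ∑ β ∈ F1, min (y α) (y β))
        + ∑ α ∈ F1, ∑ β ∈ F1, min (y α) (y β) := by
  have hF1 : ∀ α ∈ F1, α ∉ F0 := fun α hα => disjoint_right.1 hdisj hα
  have hswap : ∑ α ∈ F1, ∑ β ∈ F0, min (y α) (y β) = ∑ α ∈ F0, ∑ β ∈ F1, min (y α) (y β) := by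
    rw [sum_comm]; simp only [min_comm]
  simp +contextual only [minQuadForm, sum_union hdisj, sum_add_distrib, hF1, if_true, if_false,
    one_mul, mul_one, neg_mul, mul_neg, neg_neg, sum_neg_distrib, hswap]
  ring

theorem sum_sign_union [DecidableEq ι] {F0 F1 : Finset ι} (hdisj : Disjoint F0 F1) :
    ∑ α ∈ F0 ∪ F1, (if α ∈ F0 then (1 : ℝ) else -1) = (F0.card : ℝ) - F1.card := by
  rw [sum_union hdisj, sum_congr rfl fun α hα => if_pos hα,
    sum_congr rfl fun α hα => if_neg (disjoint_right.1 hdisj hα)]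
  simp [sub_eq_add_neg]

end MinQuadForm

theorem stmt7_general {F : Type*} [Fintype F] [Nonempty F] [DecidableEq F]
    (x : F → ℝ) (hx : ∀ α, 0 < x α) (F0 F1 : Finset F)
    (hdisj : Disjoint F0 F1) :
    ((∑ α ∈ F0, ∑ β ∈ F0, min (x α) (x β))
        - 2 * (∑ α ∈ F0, ∑ β ∈ F1, min (x α) (x β))
        + ∑ α ∈ F1, ∑ β ∈ F1, min (x α) (x β)
      ≥ ((F0.card : ℝ) - (F1.card : ℝ)) ^ 2
          * Finset.univ.inf' Finset.univ_nonempty x) ∧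
    ((∑ α ∈ F0, ∑ β ∈ F1, min (x α) (x β))
      ≤ ((∑ α ∈ F0, ∑ β ∈ F0, min (x α) (x β))
          + ∑ α ∈ F1, ∑ β ∈ F1, min (x α) (x β)) / 2) ∧
    ((∑ α ∈ F0, ∑ β ∈ F1, min (x α) (x β))
        = ((∑ α ∈ F0, ∑ β ∈ F0, min (x α) (x β))
            + ∑ α ∈ F1, ∑ β ∈ F1, min (x α) (x β)) / 2 →
      F0.card = F1.card) := by
  set m := Finset.univ.inf' Finset.univ_nonempty x
  have hm_pos : 0 < m := (Finset.lt_inf'_iff _).2 fun α _ => hx α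
  have hshift : ∀ α ∈ F0 ∪ F1, 0 ≤ x α - m := fun α _ =>
    sub_nonneg.2 (Finset.inf'_le x (Finset.mem_univ α))
  have hform := minQuadForm_eq_sq_mul_add_sub (F0 ∪ F1) (fun α => if α ∈ F0 then 1 else -1) x m
  rw [minQuadForm_union_sign hdisj, sum_sign_union hdisj] at hform
  have hbound := hform ▸ le_add_of_nonneg_right (minQuadForm_nonneg _ _ hshift)
  refine ⟨hbound, ?_, fun heq => ?_⟩
  · linarith [mul_nonneg (sq_nonneg ((F0.card : ℝ) - F1.card)) hm_pos.le]
  · have hsq : ((F0.card : ℝ) - F1.card) ^ 2 = 0 :=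
      le_antisymm (nonpos_of_mul_nonpos_left (by linarith) hm_pos) (sq_nonneg _)
    exact_mod_cast sub_eq_zero.1 (pow_eq_zero_iff two_ne_zero |>.1 hsq)

/-- Combinatorial lemma: for positive reals `x α` indexed by a nonempty finite set
`F = F₀ ⊔ F₁`, with `Σ_{εδ} = ∑_{(α,β) ∈ F_ε × F_δ} min (x α) (x β)`, one has
`Σ₀₀ − 2Σ₀₁ + Σ₁₁ ≥ (|F₀| − |F₁|)² · min x`; in particular
`Σ₀₁ ≤ (Σ₀₀ + Σ₁₁)/2`, with equality only if `|F₀| = |F₁|`. -/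
theorem stmt7 {F : Type*} [Fintype F] [Nonempty F] [DecidableEq F]
    (x : F → ℝ) (hx : ∀ α, 0 < x α) (F0 F1 : Finset F)
    (hdisj : Disjoint F0 F1) (hunion : F0 ∪ F1 = Finset.univ) :
    ((∑ α ∈ F0, ∑ β ∈ F0, min (x α) (x β))
        - 2 * (∑ α ∈ F0, ∑ β ∈ F1, min (x α) (x β))
        + ∑ α ∈ F1, ∑ β ∈ F1, min (x α) (x β)
      ≥ ((F0.card : ℝ) - (F1.card : ℝ)) ^ 2
          * Finset.univ.inf' Finset.univ_nonempty x) ∧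
    ((∑ α ∈ F0, ∑ β ∈ F1, min (x α) (x β))
      ≤ ((∑ α ∈ F0, ∑ β ∈ F0, min (x α) (x β))
          + ∑ α ∈ F1, ∑ β ∈ F1, min (x α) (x β)) / 2) ∧
    ((∑ α ∈ F0, ∑ β ∈ F1, min (x α) (x β))
        = ((∑ α ∈ F0, ∑ β ∈ F0, min (x α) (x β))
            + ∑ α ∈ F1, ∑ β ∈ F1, min (x α) (x β)) / 2 →
      F0.card = F1.card) :=
  stmt7_general x hx F0 F1 hdisj
end

section
/- If a finite family of real n×m matrices spans a subspace of Mat_{n×m}(ℝ) that is not transitive over ℝ, then, regarded as complex matrices, they span a subspace of Mat_{n×m}(ℂ) that is not transitive over ℂ. -/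
/-!
If the complex span of the `Bᵢ` is transitive, so is the real span: given real `v ≠ 0` and `w`,
transitivity over `ℂ` gives `(∑ cᵢ Bᵢ) v = w` with complex `cᵢ`, and since `Bᵢ`, `v` and `w`
are real, taking real parts gives `(∑ Re cᵢ Bᵢ) v = w`.
-/

open Complex Submodule Set
open scoped Matrix

def Submodule.IsTransitive {K α β : Type*} [Semiring K] [Fintype β]
    (Λ : Submodule K (Matrix α β K)) : Prop :=
  ∀ v : β → K, v ≠ 0 → ∀ w : α → K, ∃ M ∈ Λ, M *ᵥ v = w

namespace Matrix

variable {ι α β : Type*}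

lemma re_mulVec_ofReal [Fintype β] (M : Matrix α β ℂ) (v : β → ℝ) (i : α) :
    ((M *ᵥ fun j => (v j : ℂ)) i).re = (M.map re *ᵥ v) i := by
  simp [mulVec, dotProduct, re_sum]

lemma map_re_mem_span_of_mem_span_map_ofReal [Fintype ι] (B : ι → Matrix α β ℝ)
    {M : Matrix α β ℂ} (hM : M ∈ span ℂ (range fun i => (B i).map ofReal)) :
    M.map re ∈ span ℝ (range B) := by
  obtain ⟨c, rfl⟩ := (mem_span_range_iff_exists_fun ℂ).1 hM
  have hre : (∑ i, c i • (B i).map ofReal).map re = ∑ i, (c i).re • B i := by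
    ext; simp [Matrix.sum_apply]
  rw [hre]
  exact sum_mem fun i _ => smul_mem _ _ (subset_span ⟨i, rfl⟩)

end Matrix

theorem Submodule.IsTransitive.of_span_map_ofReal {ι α β : Type*} [Fintype ι] [Fintype β]
    (B : ι → Matrix α β ℝ)
    (hC : (span ℂ (range fun i => (B i).map ofReal)).IsTransitive) :
    (span ℝ (range B)).IsTransitive := fun v hv w => by
  have hv' : (fun j => (v j : ℂ)) ≠ 0 := fun h0 =>
    hv (funext fun j => ofReal_eq_zero.1 (congrFun h0 j))
  obtain ⟨M, hM, hMv⟩ := hC _ hv' fun i => (w i : ℂ)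
  refine ⟨M.map re, Matrix.map_re_mem_span_of_mem_span_map_ofReal B hM, funext fun i => ?_⟩
  rw [← Matrix.re_mulVec_ofReal, hMv, ofReal_re]

/-- If real matrices `B₁, …, B_k` span a subspace of `Mat_{n×m}(ℝ)` that is not
transitive over `ℝ`, then viewed as complex matrices they span a subspace of
`Mat_{n×m}(ℂ)` that is not transitive over `ℂ`. -/
theorem stmt10 {n m k : ℕ} (B : Fin k → Matrix (Fin n) (Fin m) ℝ)
    (h : ¬ ∀ v : Fin m → ℝ, v ≠ 0 → ∀ w : Fin n → ℝ,
        ∃ M ∈ Submodule.span ℝ (Set.range B), M.mulVec v = w) :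
    ¬ ∀ v : Fin m → ℂ, v ≠ 0 → ∀ w : Fin n → ℂ,
        ∃ M ∈ Submodule.span ℂ
          (Set.range fun i => (B i).map (fun x : ℝ => (x : ℂ))),
          M.mulVec v = w :=
  fun hC => h (Submodule.IsTransitive.of_span_map_ofReal B hC)
end

section
/- Let A ∈ GL(d,ℂ) be a diagonal matrix Diag(λ₁,…,λ_d) whose eigenvalues are unconstrained, meaning the d²−d values λ_i λ_j⁻¹ for i ≠ j are pairwise distinct and all different from 1. If matrices B₁,…,B_m are such that for every off-diagonal position (i,j) at least one B_k has nonzero (i,j)-entry, then the smallest Ad_A-invariant subspace of Mat_{d×d}(ℂ) containing Id, B₁,…,B_m is transitive. -/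
/-!
Conjugation by `A = diagonal λ` scales the `(i, j)` entry by `λᵢ / λⱼ`, so a linear combination
`∑ₜ pₜ Aᵗ B A⁻ᵗ` multiplies the `(i, j)` entry of `B` by `p(λᵢ / λⱼ)`. When the ratio at an
off-diagonal position `(i₀, j₀)` occurs nowhere else, a Lagrange basis polynomial `p` isolates that
entry, so the invariant subspace contains every off-diagonal matrix unit. Together with `1` it
then contains `a • 1 + N` for every `a` and every `N` with zero diagonal, and such matrices already
send a vector with `vᵢ₀ ≠ 0` to any prescribed `w`.
-/

open Matrix Polynomial

namespace Matrix

variable {n K : Type*} [Fintype n] [DecidableEq n] [Field K]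

theorem inv_diagonal_of_ne_zero {lam : n → K} (hlam : ∀ i, lam i ≠ 0) :
    (diagonal lam)⁻¹ = diagonal fun i => (lam i)⁻¹ :=
  inv_eq_right_inv <| by
    rw [diagonal_mul_diagonal, ← diagonal_one]
    exact congrArg diagonal (funext fun i => mul_inv_cancel₀ (hlam i))

theorem diagonal_pow_mul_mul_inv_pow_apply {lam : n → K} (hlam : ∀ i, lam i ≠ 0) (t : ℕ)
    (Y : Matrix n n K) (i j : n) :
    (diagonal lam ^ t * Y * (diagonal lam)⁻¹ ^ t) i j = (lam i * (lam j)⁻¹) ^ t * Y i j := by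
  rw [inv_diagonal_of_ne_zero hlam, diagonal_pow, diagonal_pow, mul_diagonal, diagonal_mul,
    Pi.pow_apply, Pi.pow_apply, mul_pow]
  ring

theorem sum_coeff_smul_diagonal_conj_apply {lam : n → K} (hlam : ∀ i, lam i ≠ 0) (p : K[X])
    (Y : Matrix n n K) (i j : n) :
    (∑ t ∈ Finset.range (p.natDegree + 1),
        p.coeff t • (diagonal lam ^ t * Y * (diagonal lam)⁻¹ ^ t)) i j =
      p.eval (lam i * (lam j)⁻¹) * Y i j := by
  rw [eval_eq_sum_range, Finset.sum_mul, sum_apply]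
  refine Finset.sum_congr rfl fun t _ => ?_
  rw [smul_apply, diagonal_pow_mul_mul_inv_pow_apply hlam, smul_eq_mul, mul_assoc]

theorem single_mem_span_diagonal_conj {lam : n → K} (hlam : ∀ i, lam i ≠ 0) {i₀ j₀ : n}
    (huniq : ∀ i j, (i, j) ≠ (i₀, j₀) → lam i * (lam j)⁻¹ ≠ lam i₀ * (lam j₀)⁻¹)
    (Y : Matrix n n K) :
    single i₀ j₀ (Y i₀ j₀) ∈ Submodule.span K
      (Set.range fun t : ℕ => diagonal lam ^ t * Y * (diagonal lam)⁻¹ ^ t) := by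
  classical
  let ratio : n × n → K := fun q => lam q.1 * (lam q.2)⁻¹
  let p : K[X] := Lagrange.basis (Finset.univ.image ratio) id (ratio (i₀, j₀))
  have hmem : ∀ q, ratio q ∈ Finset.univ.image ratio := fun q =>
    Finset.mem_image_of_mem ratio (Finset.mem_univ q)
  have hp : ∀ q, p.eval (ratio q) = if q = (i₀, j₀) then 1 else 0 := by
    intro q
    split_ifs with h
    · rw [h]
      exact Lagrange.eval_basis_self (v := id) (Set.injOn_id _) (hmem _)
    · exact Lagrange.eval_basis_of_ne (v := id) (huniq q.1 q.2 h).symm (hmem q)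
  have hsum : ∑ t ∈ Finset.range (p.natDegree + 1),
      p.coeff t • (diagonal lam ^ t * Y * (diagonal lam)⁻¹ ^ t) = single i₀ j₀ (Y i₀ j₀) := by
    ext i j
    rw [sum_coeff_smul_diagonal_conj_apply hlam, hp (i, j), single_apply]
    by_cases h : i₀ = i ∧ j₀ = j
    · obtain ⟨rfl, rfl⟩ := h
      simp
    · simp [Prod.ext_iff, eq_comm, h]
  rw [← hsum]
  exact Submodule.sum_mem _ fun t _ => Submodule.smul_mem _ _ (Submodule.subset_span ⟨t, rfl⟩)

theorem mem_of_forall_diag_eq_zero {Λ : Submodule K (Matrix n n K)}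
    (hΛ : ∀ i j, i ≠ j → single i j (1 : K) ∈ Λ) {N : Matrix n n K} (hN : ∀ i, N i i = 0) :
    N ∈ Λ := by
  rw [matrix_eq_sum_single N]
  refine Submodule.sum_mem _ fun i _ => Submodule.sum_mem _ fun j _ => ?_
  obtain rfl | hij := eq_or_ne i j
  · rw [hN, single_zero]
    exact Λ.zero_mem
  · simpa [smul_single] using Λ.smul_mem (N i j) (hΛ i j hij)

theorem exists_smul_one_add_mulVec_eq {v : n → K} (hv : v ≠ 0) (w : n → K) :
    ∃ (a : K) (N : Matrix n n K), (∀ i, N i i = 0) ∧ (a • 1 + N) *ᵥ v = w := by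
  obtain ⟨i₀, hi₀⟩ := Function.ne_iff.1 hv
  let a := w i₀ / v i₀
  let c := (v i₀)⁻¹ • (w - a • v)
  have hc : c i₀ = 0 := by simp [c, a, div_mul_cancel₀ _ hi₀]
  refine ⟨a, vecMulVec c (Pi.single i₀ 1), fun i => ?_, ?_⟩
  · obtain rfl | hi := eq_or_ne i i₀
    · simp [vecMulVec_apply, hc]
    · simp [vecMulVec_apply, hi]
  · rw [add_mulVec, smul_mulVec, one_mulVec, vecMulVec_mulVec, single_dotProduct, one_mul,
      op_smul_eq_smul, smul_smul, mul_inv_cancel₀ hi₀, one_smul, add_sub_cancel]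

theorem exists_mem_mulVec_eq {Λ : Submodule K (Matrix n n K)} (h1 : 1 ∈ Λ)
    (hΛ : ∀ i j, i ≠ j → single i j (1 : K) ∈ Λ) {v : n → K} (hv : v ≠ 0) (w : n → K) :
    ∃ X ∈ Λ, X *ᵥ v = w := by
  obtain ⟨a, N, hN, hX⟩ := exists_smul_one_add_mulVec_eq hv w
  exact ⟨a • 1 + N, Λ.add_mem (Λ.smul_mem a h1) (mem_of_forall_diag_eq_zero hΛ hN), hX⟩

end Matrix

/-- If `A = diagonal lam` is unconstrained (the ratios `lam i / lam j`, `i ≠ j`,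
are pairwise distinct and all different from `1`) and for every off-diagonal
position some `B k` has a nonzero entry there, then the smallest
`Ad_A`-invariant subspace containing `1` and the `B k` is transitive. -/
theorem stmt11 {d m : ℕ} (lam : Fin d → ℂ) (hlam : ∀ i, lam i ≠ 0)
    (hdist : ∀ i j i' j' : Fin d, i ≠ j → i' ≠ j' → (i, j) ≠ (i', j') →
      lam i * (lam j)⁻¹ ≠ lam i' * (lam j')⁻¹)
    (hne1 : ∀ i j : Fin d, i ≠ j → lam i * (lam j)⁻¹ ≠ 1)
    (B : Fin m → Matrix (Fin d) (Fin d) ℂ)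
    (hB : ∀ i j : Fin d, i ≠ j → ∃ k, B k i j ≠ 0)
    (v : Fin d → ℂ) (hv : v ≠ 0) (w : Fin d → ℂ) :
    ∃ X ∈ Submodule.span ℂ
      {X : Matrix (Fin d) (Fin d) ℂ | ∃ t : ℕ, ∃ Y : Matrix (Fin d) (Fin d) ℂ,
        (Y = 1 ∨ ∃ k, Y = B k) ∧
        X = (Matrix.diagonal lam) ^ t * Y * ((Matrix.diagonal lam)⁻¹) ^ t},
      X.mulVec v = w := by
  refine exists_mem_mulVec_eq (Submodule.subset_span ?_) (fun i₀ j₀ hij => ?_) hv w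
  · exact ⟨0, 1, Or.inl rfl, by simp⟩
  obtain ⟨k, hk⟩ := hB i₀ j₀ hij
  have huniq : ∀ i j, (i, j) ≠ (i₀, j₀) → lam i * (lam j)⁻¹ ≠ lam i₀ * (lam j₀)⁻¹ := by
    intro i j h
    obtain rfl | hij' := eq_or_ne i j
    · rw [mul_inv_cancel₀ (hlam i)]
      exact (hne1 i₀ j₀ hij).symm
    · exact hdist i j i₀ j₀ hij' hij h
  have h := Submodule.smul_mem _ (B k i₀ j₀)⁻¹ (single_mem_span_diagonal_conj hlam huniq (B k))
  rw [smul_single, smul_eq_mul, inv_mul_cancel₀ hk] at h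
  refine Submodule.span_mono ?_ h
  rintro _ ⟨t, rfl⟩
  exact ⟨t, B k, Or.inr ⟨k, rfl⟩, rfl⟩
end

section
/- Let λ, μ be nonzero complex numbers and s, t ≥ 1. The operator X ↦ J_t(λ) · X · J_s(μ)⁻¹ on Mat_{t×s}(ℂ) has exactly one eigenvalue, namely λ/μ, and the geometric multiplicity of this eigenvalue is min(t, s). -/
noncomputable def jordanBlock (t : ℕ) (lam : ℂ) : Matrix (Fin t) (Fin t) ℂ :=
  Matrix.of fun i j => if i = j then lam else if (i : ℕ) + 1 = (j : ℕ) then 1 else 0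

noncomputable def conjOp (t s : ℕ) (lam mu : ℂ) :
    Matrix (Fin t) (Fin s) ℂ →ₗ[ℂ] Matrix (Fin t) (Fin s) ℂ where
  toFun X := jordanBlock t lam * X * (jordanBlock s mu)⁻¹
  map_add' X Y := by (try simp only []); rw [Matrix.mul_add, Matrix.add_mul]
  map_smul' a X := by
    simp [Matrix.mul_smul, Matrix.smul_mul]

/-!
Write `J_t(λ) = λ + N_t` with `N_t` nilpotent. An eigenvector `X` for `ν` satisfies
`(λ - νμ) X = ν X N_s - N_t X`, and `X ↦ ν X N_s - N_t X` is nilpotent, being a difference of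
commuting nilpotent operators; hence `ν = λ/μ`. For `ν = λ/μ` the eigen-equation reads
`A X = X N_s` with `A = (μ/λ) N_t`. The last basis vector is cyclic for `N_s`, so such an `X` is
determined by its last column `v`, which may be any vector with `A^s v = 0`. The eigenspace is
therefore isomorphic to `ker N_t^s`, the vectors supported on the first `min t s` coordinates.
-/

open Matrix Module
open LinearMap (ker proj iInfKerProjEquiv)

section JordanBlock

theorem jordanBlock_eq_smul_one_add (n : ℕ) (a : ℂ) :
    jordanBlock n a = a • 1 + jordanBlock n 0 := by
  ext i j
  by_cases h : i = j <;> simp [jordanBlock, one_apply, h]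

theorem det_jordanBlock (n : ℕ) (a : ℂ) : (jordanBlock n a).det = a ^ n := by
  rw [det_of_isUpperTriangular]
  · simp [jordanBlock]
  · intro i j hij
    have : (j : ℕ) < i := hij
    simp only [jordanBlock, of_apply]
    grind

variable {n : ℕ}

theorem jordanBlock_zero_apply (i j : Fin n) :
    jordanBlock n 0 i j = if (i : ℕ) + 1 = j then 1 else 0 := by
  by_cases h : i = j
  · subst h; simp [jordanBlock]
  · simp [jordanBlock, h]

theorem mul_jordanBlock_zero_apply_zero {m : Type*} (X : Matrix m (Fin (n + 1)) ℂ) (i : m) :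
    (X * jordanBlock (n + 1) 0) i 0 = 0 := by
  rw [mul_apply]
  exact Finset.sum_eq_zero fun j _ ↦ by simp [jordanBlock_zero_apply]

theorem mul_jordanBlock_zero_apply_succ {m : Type*} (X : Matrix m (Fin (n + 1)) ℂ) (i : m)
    (j : Fin n) :
    (X * jordanBlock (n + 1) 0) i j.succ = X i j.castSucc := by
  rw [mul_apply, Finset.sum_eq_single j.castSucc] <;> simp [jordanBlock_zero_apply]
  grind

theorem jordanBlock_zero_pow_apply (k : ℕ) (i j : Fin n) :
    (jordanBlock n 0 ^ k) i j = if (i : ℕ) + k = j then 1 else 0 := by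
  induction k generalizing j with
  | zero => simp [one_apply, Fin.ext_iff]
  | succ k ih =>
    rw [pow_succ, mul_apply]
    simp only [ih, jordanBlock_zero_apply, ite_mul, one_mul, zero_mul]
    by_cases h : (i : ℕ) + k < n
    · rw [Finset.sum_eq_single ⟨i + k, h⟩] <;> grind
    · rw [Finset.sum_eq_zero] <;> grind

theorem isNilpotent_jordanBlock_zero : IsNilpotent (jordanBlock n 0) := by
  refine ⟨n, ?_⟩
  ext i j
  rw [jordanBlock_zero_pow_apply, Matrix.zero_apply, if_neg (by omega)]

theorem jordanBlock_zero_pow_mulVec_apply (k : ℕ) (v : Fin n → ℂ) (i : Fin n) :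
    (jordanBlock n 0 ^ k *ᵥ v) i = if h : (i : ℕ) + k < n then v ⟨i + k, h⟩ else 0 := by
  simp only [mulVec, dotProduct, jordanBlock_zero_pow_apply, ite_mul, one_mul, zero_mul]
  split_ifs with h
  · rw [Finset.sum_eq_single ⟨i + k, h⟩] <;> grind
  · exact Finset.sum_eq_zero fun j _ ↦ by grind

theorem ker_toLin'_jordanBlock_zero_pow (k : ℕ) :
    ker (toLin' (jordanBlock n 0 ^ k)) = ⨅ j ∈ {j : Fin n | k ≤ (j : ℕ)}, ker (proj j) := by
  ext v
  simp only [LinearMap.mem_ker, toLin'_apply, Submodule.mem_iInf, Set.mem_ofPred_eq,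
    LinearMap.proj_apply]
  constructor
  · intro hv j hj
    have := congrFun hv ⟨j - k, by omega⟩
    rw [jordanBlock_zero_pow_mulVec_apply, dif_pos (by simp; omega)] at this
    simpa [Nat.sub_add_cancel hj] using this
  · intro hv
    funext i
    rw [jordanBlock_zero_pow_mulVec_apply]
    split_ifs
    · exact hv _ (by simp)
    · rfl

theorem finrank_ker_toLin'_jordanBlock_zero_pow (k : ℕ) :
    finrank ℂ (ker (toLin' (jordanBlock n 0 ^ k))) = min n k := by
  rw [ker_toLin'_jordanBlock_zero_pow, (iInfKerProjEquiv ℂ (fun _ ↦ ℂ)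
    (I := {j : Fin n | (j : ℕ) < k}) ?_ ?_).finrank_eq, finrank_fintype_fun_eq_card,
    Fintype.card_subtype]
  · exact Fin.card_filter_val_lt
  · rw [Set.disjoint_left]; intro j; simp
  · intro j; simp; omega

end JordanBlock

theorem transpose_mul_apply_eq_mulVec {l m n α : Type*} [Fintype m]
    [NonUnitalNonAssocSemiring α] (A : Matrix l m α) (X : Matrix m n α) (j : n) :
    (A * X)ᵀ j = A *ᵥ Xᵀ j :=
  rfl

section Intertwiners

variable {m : Type*} [Fintype m] {n : ℕ}

def intertwiners {k : Type*} [Fintype k] (A : Matrix m m ℂ) (B : Matrix k k ℂ) :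
    Submodule ℂ (Matrix m k ℂ) :=
  ker (mulLeftLinearMap k ℂ A - mulRightLinearMap m ℂ B)

theorem mem_intertwiners_iff {k : Type*} [Fintype k] {A : Matrix m m ℂ} {B : Matrix k k ℂ}
    {X : Matrix m k ℂ} : X ∈ intertwiners A B ↔ A * X = X * B := by
  simp [intertwiners, sub_eq_zero]

variable [DecidableEq m] {A : Matrix m m ℂ} {X : Matrix m (Fin (n + 1)) ℂ}

theorem transpose_apply_eq_pow_mulVec_last (hX : X ∈ intertwiners A (jordanBlock (n + 1) 0))
    (j : Fin (n + 1)) : Xᵀ j = A ^ (n - j) *ᵥ Xᵀ (Fin.last n) := by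
  rw [mem_intertwiners_iff] at hX
  induction j using Fin.reverseInduction with
  | last => simp
  | cast j ih =>
    have hcol : Xᵀ j.castSucc = A *ᵥ Xᵀ j.succ := by
      rw [← transpose_mul_apply_eq_mulVec, hX]
      funext i
      exact (mul_jordanBlock_zero_apply_succ X i j).symm
    rw [hcol, ih, mulVec_mulVec, ← pow_succ']
    congr 2
    simp; omega

theorem pow_succ_mulVec_transpose_last (hX : X ∈ intertwiners A (jordanBlock (n + 1) 0)) :
    A ^ (n + 1) *ᵥ Xᵀ (Fin.last n) = 0 := by
  have hcol₀ := transpose_apply_eq_pow_mulVec_last hX 0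
  rw [Fin.val_zero, Nat.sub_zero] at hcol₀
  rw [pow_succ', ← mulVec_mulVec, ← hcol₀, ← transpose_mul_apply_eq_mulVec,
    mem_intertwiners_iff.mp hX]
  funext i
  exact mul_jordanBlock_zero_apply_zero X i

theorem of_pow_mulVec_mem_intertwiners {v : m → ℂ} (hv : A ^ (n + 1) *ᵥ v = 0) :
    of (fun i (j : Fin (n + 1)) ↦ (A ^ (n - j) *ᵥ v) i) ∈
      intertwiners A (jordanBlock (n + 1) 0) := by
  rw [mem_intertwiners_iff]
  ext i j
  change (A *ᵥ (A ^ (n - j) *ᵥ v)) i = _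
  rw [mulVec_mulVec, ← pow_succ']
  induction j using Fin.cases with
  | zero => simp [mul_jordanBlock_zero_apply_zero, hv]
  | succ j =>
    rw [mul_jordanBlock_zero_apply_succ, of_apply]
    congr 3
    simp; omega

variable (A n) in
def intertwinersJordanBlockEquiv :
    intertwiners A (jordanBlock (n + 1) 0) ≃ₗ[ℂ] ker (toLin' (A ^ (n + 1))) where
  toFun X := ⟨X.1ᵀ (Fin.last n), pow_succ_mulVec_transpose_last X.2⟩
  map_add' _ _ := rfl
  map_smul' _ _ := rfl
  invFun v := ⟨_, of_pow_mulVec_mem_intertwiners v.2⟩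
  left_inv X := by
    ext i j
    exact congrFun (transpose_apply_eq_pow_mulVec_last X.2 j).symm i
  right_inv v := by
    ext i
    simp

end Intertwiners

section ConjOp

variable {t s : ℕ} {lam mu : ℂ}

theorem conjOp_apply (X : Matrix (Fin t) (Fin s) ℂ) :
    conjOp t s lam mu X = jordanBlock t lam * X * (jordanBlock s mu)⁻¹ :=
  rfl

theorem conjOp_apply_eq_smul_iff (hmu : mu ≠ 0) {ν : ℂ} {X : Matrix (Fin t) (Fin s) ℂ} :
    conjOp t s lam mu X = ν • X ↔
      lam • X + jordanBlock t 0 * X = (ν * mu) • X + ν • (X * jordanBlock s 0) := by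
  have hB : IsUnit (jordanBlock s mu).det := by
    rw [det_jordanBlock]
    exact (pow_ne_zero s hmu).isUnit
  have hconj : jordanBlock t lam * X * (jordanBlock s mu)⁻¹ = ν • X ↔
      jordanBlock t lam * X = ν • X * jordanBlock s mu :=
    ⟨fun h ↦ by rw [← h, nonsing_inv_mul_cancel_right _ _ hB],
     fun h ↦ by rw [h, mul_nonsing_inv_cancel_right _ _ hB]⟩
  rw [conjOp_apply, hconj, jordanBlock_eq_smul_one_add t, jordanBlock_eq_smul_one_add s]
  simp only [Matrix.add_mul, Matrix.mul_add, Matrix.smul_mul, Matrix.mul_smul, Matrix.one_mul,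
    Matrix.mul_one, smul_smul, mul_comm mu ν]

theorem isNilpotent_smul_mulRightLinearMap_sub_mulLeftLinearMap {m k : Type*} [Fintype m]
    [DecidableEq m] [Fintype k] [DecidableEq k] {A : Matrix m m ℂ} {B : Matrix k k ℂ}
    (hA : IsNilpotent A) (hB : IsNilpotent B) (ν : ℂ) :
    IsNilpotent (ν • mulRightLinearMap m ℂ B - mulLeftLinearMap k ℂ A) := by
  obtain ⟨a, ha⟩ := hA
  obtain ⟨b, hb⟩ := hB
  refine Commute.isNilpotent_sub ?_ (IsNilpotent.smul ⟨b, ?_⟩ ν) ⟨a, ?_⟩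
  · exact Commute.smul_left (commute_mulLeftLinearMap_mulRightLinearMap A B).symm ν
  · rw [pow_mulRightLinearMap, hb, mulRightLinearMap_zero_eq_zero]
  · rw [pow_mulLeftLinearMap, ha, mulLeftLinearMap_zero_eq_zero]

theorem eq_div_of_hasEigenvalue_conjOp (hmu : mu ≠ 0) {ν : ℂ}
    (h : End.HasEigenvalue (conjOp t s lam mu) ν) : ν = lam / mu := by
  obtain ⟨X, hX⟩ := h.exists_hasEigenvector
  have hS : End.HasEigenvector (ν • mulRightLinearMap (Fin t) ℂ (jordanBlock s 0) -
      mulLeftLinearMap (Fin s) ℂ (jordanBlock t 0)) (lam - ν * mu) X := by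
    refine ⟨End.mem_eigenspace_iff.mpr ?_, hX.2⟩
    have hXeq := (conjOp_apply_eq_smul_iff hmu).mp (End.mem_eigenspace_iff.mp hX.1)
    change ν • (X * jordanBlock s 0) - jordanBlock t 0 * X = _
    rw [sub_smul, sub_eq_sub_iff_add_eq_add, hXeq, add_comm]
  have hnil := (End.hasEigenvalue_of_hasEigenvector hS).isNilpotent_of_isNilpotent
    (isNilpotent_smul_mulRightLinearMap_sub_mulLeftLinearMap isNilpotent_jordanBlock_zero
      isNilpotent_jordanBlock_zero ν)
  exact (eq_div_iff hmu).mpr (sub_eq_zero.mp hnil.eq_zero).symm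

theorem eigenspace_conjOp_div (hlam : lam ≠ 0) (hmu : mu ≠ 0) :
    End.eigenspace (conjOp t s lam mu) (lam / mu) =
      intertwiners ((mu / lam) • jordanBlock t 0) (jordanBlock s 0) := by
  ext X
  rw [End.mem_eigenspace_iff, conjOp_apply_eq_smul_iff hmu, mem_intertwiners_iff,
    div_mul_cancel₀ lam hmu, add_right_inj, smul_mul, ← inv_div, eq_inv_smul_iff₀]
  exact div_ne_zero hmu hlam

theorem finrank_eigenspace_conjOp_div (hs : 1 ≤ s) (hlam : lam ≠ 0) (hmu : mu ≠ 0) :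
    finrank ℂ (End.eigenspace (conjOp t s lam mu) (lam / mu)) = min t s := by
  obtain ⟨n, rfl⟩ := Nat.exists_eq_add_of_le' hs
  rw [eigenspace_conjOp_div hlam hmu,
    (intertwinersJordanBlockEquiv n ((mu / lam) • jordanBlock t 0)).finrank_eq, smul_pow,
    map_smul, LinearMap.ker_smul _ _ (pow_ne_zero _ (div_ne_zero hmu hlam)),
    finrank_ker_toLin'_jordanBlock_zero_pow]

end ConjOp

/-- The operator `X ↦ J_t(λ) X J_s(μ)⁻¹` has exactly one eigenvalue, namely
`λ/μ`, and the geometric multiplicity of this eigenvalue is `min t s`. -/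
theorem stmt13 (t s : ℕ) (ht : 1 ≤ t) (hs : 1 ≤ s) (lam mu : ℂ)
    (hlam : lam ≠ 0) (hmu : mu ≠ 0) :
    (∀ ν : ℂ, Module.End.HasEigenvalue (conjOp t s lam mu) ν ↔ ν = lam / mu) ∧
      Module.finrank ℂ
        (Module.End.eigenspace (conjOp t s lam mu) (lam / mu)) = min t s := by
  have hdim := finrank_eigenspace_conjOp_div (t := t) hs hlam hmu
  refine ⟨fun ν ↦ ⟨eq_div_of_hasEigenvalue_conjOp hmu, ?_⟩, hdim⟩
  rintro rfl
  rw [End.hasEigenvalue_iff, Ne, ← Submodule.finrank_eq_zero, hdim]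
  omega
end

section
/- Sudoku transitivity criterion: Let partitions of [1,t] and [1,s] into intervals be given, inducing a partition 𝓡 of the index set [1,t]×[1,s] into rectangles. Let Λ be a subspace of t×s complex matrices. For a rectangle R ∈ 𝓡, say a matrix M ∈ Λ is R-adapted if all entries of M lying strictly above-left of R in column index and strictly below-right of R in row index vanish, i.e., M has block form with nonzero blocks only in the upper-left block, the block R itself, and the lower-right block. Define Λ^{[R]} as the set of R-submatrices of R-adapted elements of Λ. If Λ^{[R]} is a transitive space of matrices (of the appropriate rectangular size, in the sense that its orbit of every nonzero vector is the full target space) for every R ∈ 𝓡, then Λ is a transitive subspace of L(ℂˢ, ℂᵗ). -/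
/-!
Let `b` be the first column block on which `u` is nonzero, and `u'` the part of `u` on that block.
A matrix adapted to the rectangle `(a, b)` kills `u` on the row blocks above `a`, because there it
only sees column blocks before `b`, where `u` vanishes; and on the row block `a` it only sees
column block `b`, so it acts on `u` as on `u'`. Transitivity of `Λ^{[(a, b)]}` at `u'` therefore
corrects the row block `a` of `M *ᵥ u` without disturbing the row blocks above it, and one fixes
the row blocks one after another.
-/

open Matrix

theorem Matrix.mulVec_apply_congr {ι κ R : Type*} [Fintype κ] [NonUnitalNonAssocSemiring R]
    {M : Matrix ι κ R} {u v : κ → R} {i : ι} (h : ∀ j, M i j ≠ 0 → u j = v j) :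
    (M *ᵥ u) i = (M *ᵥ v) i := by
  refine Finset.sum_congr rfl fun j _ => ?_
  by_cases hj : M i j = 0
  · simp [hj]
  · rw [h j hj]

def IsBlockAdapted {ι κ R : Type*} [Zero R] (r : ι → ℕ) (c : κ → ℕ) (a b : ℕ)
    (M : Matrix ι κ R) : Prop :=
  ∀ i j, M i j ≠ 0 → (r i < a ∧ c j < b) ∨ (r i = a ∧ c j = b) ∨ (a < r i ∧ b < c j)

section BlockAdapted

variable {ι κ R : Type*} [Fintype κ] {r : ι → ℕ} {c : κ → ℕ} {a b : ℕ} {u : κ → R}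

section Semiring

variable [NonUnitalNonAssocSemiring R] {M : Matrix ι κ R} {i : ι}

theorem IsBlockAdapted.mulVec_apply_eq_zero (hM : IsBlockAdapted r c a b M)
    (hu : ∀ j, c j < b → u j = 0) (hi : r i < a) : (M *ᵥ u) i = 0 := by
  rw [mulVec_apply_congr (v := 0), mulVec_zero, Pi.zero_apply]
  intro j hj
  rcases hM i j hj with ⟨-, hcj⟩ | ⟨hri, -⟩ | ⟨hri, -⟩
  · exact hu j hcj
  all_goals omega

theorem IsBlockAdapted.mulVec_indicator_apply (hM : IsBlockAdapted r c a b M) (hi : r i = a) :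
    (M *ᵥ (c ⁻¹' {b}).indicator u) i = (M *ᵥ u) i := by
  refine mulVec_apply_congr fun j hj => ?_
  rcases hM i j hj with ⟨hri, -⟩ | ⟨-, hcj⟩ | ⟨hri, -⟩
  · omega
  · exact Set.indicator_of_mem (s := c ⁻¹' {b}) hcj u
  · omega

end Semiring

theorem exists_mulVec_eq_of_forall_isBlockAdapted [Fintype ι] [Ring R]
    (Λ : Submodule R (Matrix ι κ R))
    (hu : ∀ j, c j < b → u j = 0)
    (hblock : ∀ a ∈ Set.range r, ∀ w : ι → R,
      ∃ M ∈ Λ, IsBlockAdapted r c a b M ∧ ∀ i, r i = a → (M *ᵥ u) i = w i)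
    (w : ι → R) : ∃ M ∈ Λ, M *ᵥ u = w := by
  have upTo : ∀ n, ∃ M ∈ Λ, ∀ i, r i < n → (M *ᵥ u) i = w i := by
    intro n
    induction n with
    | zero => exact ⟨0, Λ.zero_mem, fun i hi => absurd hi (Nat.not_lt_zero _)⟩
    | succ n ih =>
      obtain ⟨M, hM, hMw⟩ := ih
      by_cases hn : n ∈ Set.range r
      · obtain ⟨M', hM', hadapt, hM'w⟩ := hblock n hn (w - M *ᵥ u)
        refine ⟨M + M', Λ.add_mem hM hM', fun i hi => ?_⟩
        rw [add_mulVec, Pi.add_apply]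
        rcases Nat.lt_succ_iff_lt_or_eq.1 hi with hlt | heq
        · rw [hadapt.mulVec_apply_eq_zero hu hlt, hMw i hlt, add_zero]
        · rw [hM'w i heq, Pi.sub_apply, add_sub_cancel]
      · exact ⟨M, hM, fun i hi => hMw i (by grind)⟩
  obtain ⟨M, hM, hMw⟩ := upTo (Finset.univ.sup r + 1)
  exact ⟨M, hM, funext fun i => hMw i (Nat.lt_succ_of_le (Finset.le_sup (Finset.mem_univ i)))⟩

end BlockAdapted

theorem exists_minimal_block_of_ne_zero {κ R : Type*} [Zero R] (c : κ → ℕ) {u : κ → R}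
    (hu : u ≠ 0) :
    ∃ b ∈ Set.range c, (∀ j, c j < b → u j = 0) ∧ (c ⁻¹' {b}).indicator u ≠ 0 := by
  classical
  have hex : ∃ b, ∃ j, c j = b ∧ u j ≠ 0 := by
    obtain ⟨j, hj⟩ := Function.ne_iff.1 hu
    exact ⟨c j, j, rfl, hj⟩
  obtain ⟨j, hj, hju⟩ := Nat.find_spec hex
  refine ⟨Nat.find hex, ⟨j, hj⟩, fun j' hj' => ?_, fun h => hju ?_⟩
  · by_contra h
    exact Nat.find_min hex hj' ⟨j', rfl, h⟩
  · simpa [hj] using congr_fun h j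

theorem stmt16_general (t s : ℕ) (r : Fin t → ℕ) (c : Fin s → ℕ)
    (Λ : Submodule ℂ (Matrix (Fin t) (Fin s) ℂ))
    (htrans : ∀ a ∈ Set.range r, ∀ b ∈ Set.range c,
      ∀ u : Fin s → ℂ, (∀ j, c j ≠ b → u j = 0) → u ≠ 0 →
      ∀ w : Fin t → ℂ,
        ∃ M ∈ Λ,
          (∀ i j, M i j ≠ 0 →
            (r i < a ∧ c j < b) ∨ (r i = a ∧ c j = b) ∨ (a < r i ∧ b < c j)) ∧
          ∀ i, r i = a → M.mulVec u i = w i)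
    (u : Fin s → ℂ) (hu : u ≠ 0) (w : Fin t → ℂ) :
    ∃ M ∈ Λ, M.mulVec u = w := by
  obtain ⟨b, hb, hbelow, hu'⟩ := exists_minimal_block_of_ne_zero c hu
  refine exists_mulVec_eq_of_forall_isBlockAdapted (r := r) Λ hbelow (fun a ha w => ?_) w
  obtain ⟨M, hM, hadapt, hMw⟩ :=
    htrans a ha b hb _ (fun j hj => Set.indicator_of_notMem (s := c ⁻¹' {b}) hj u) hu' w
  exact ⟨M, hM, hadapt, fun i hi =>
    (IsBlockAdapted.mulVec_indicator_apply hadapt hi).symm.trans (hMw i hi)⟩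

/-- Sudoku transitivity criterion.  Partitions of the row indices `Fin t` and
column indices `Fin s` into intervals are encoded by monotone block-labelling
maps `r : Fin t → ℕ` and `c : Fin s → ℕ` (the fibers are the intervals).  A
matrix `M` is adapted to the rectangle `R = (a, b)` if its entries vanish
outside the three diagonal blocks: above-left of `R`, `R` itself, and
below-right of `R`.  If for every rectangle `R` the space `Λ^{[R]}` of
`R`-submatrices of `R`-adapted elements of `Λ` is transitive (for every nonzero
vector supported on the columns of `R` and every target on the rows of `R`,
some adapted `M ∈ Λ` realizes it), then `Λ` is transitive. -/
theorem stmt16 (t s : ℕ) (r : Fin t → ℕ) (c : Fin s → ℕ)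
    (hr : Monotone r) (hc : Monotone c)
    (Λ : Submodule ℂ (Matrix (Fin t) (Fin s) ℂ))
    (htrans : ∀ a ∈ Set.range r, ∀ b ∈ Set.range c,
      ∀ u : Fin s → ℂ, (∀ j, c j ≠ b → u j = 0) → u ≠ 0 →
      ∀ w : Fin t → ℂ,
        ∃ M ∈ Λ,
          (∀ i j, M i j ≠ 0 →
            (r i < a ∧ c j < b) ∨ (r i = a ∧ c j = b) ∨ (a < r i ∧ b < c j)) ∧
          ∀ i, r i = a → M.mulVec u i = w i)
    (u : Fin s → ℂ) (hu : u ≠ 0) (w : Fin t → ℂ) :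
    ∃ M ∈ Λ, M.mulVec u = w :=
  stmt16_general t s r c Λ htrans u hu w
end
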